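/- Let μ be a partition and let t ∈ ℂ with 0 < |t| < 1. Then the double series Σ over pairs 1 ≤ i < j < ∞ of ( t^{μ_i − μ_j + j − i} − t^{j − i} ) converges absolutely and equals − Σ_{x∈μ} t^{h(x)}, where h(x) = μ_i + (μ^t)_j − i − j + 1 is the hook length of the cell x = (i,j) of μ. -/

import Mathlib

/-- A partition `μ = (μ_1 ≥ μ_2 ≥ …)`: a weakly decreasing, eventually zero sequence of
naturals.  We index parts from `0`, so `part i` is the part `μ_{i+1}` of the paper. -/
structure Partition' where
  part : ℕ → ℕ
  antitone' : ∀ ⦃i j : ℕ⦄, i ≤ j → part j ≤ part i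
  eventually_zero : ∃ N, ∀ n, N ≤ n → part n = 0

namespace Partition'

/-- The Young diagram of `μ`, as a set of (0-indexed) cells `(i, j)`, `j < μ_{i+1}`. -/
def cellsSet (μ : Partition') : Set (ℕ × ℕ) := {x | x.2 < μ.part x.1}

lemma cellsSet_finite (μ : Partition') : μ.cellsSet.Finite := by
  obtain ⟨N, hN⟩ := μ.eventually_zero
  have hsub : μ.cellsSet ⊆ Set.Iio N ×ˢ Set.Iio (μ.part 0) := by
    rintro ⟨i, j⟩ hx
    have hj : j < μ.part i := hx
    refine Set.mem_prod.mpr ⟨?_, ?_⟩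
    · by_contra h
      simp only [Set.mem_Iio, not_lt] at h
      rw [hN i h] at hj
      omega
    · exact Set.mem_Iio.mpr (lt_of_lt_of_le hj (μ.antitone' (Nat.zero_le i)))
  exact ((Set.finite_Iio N).prod (Set.finite_Iio (μ.part 0))).subset hsub

/-- The cells of the Young diagram of `μ`, as a finite set. -/
noncomputable def cells (μ : Partition') : Finset (ℕ × ℕ) := μ.cellsSet_finite.toFinset

/-- `|μ|`, the size (number of cells, i.e. sum of the parts) of `μ`. -/
noncomputable def size (μ : Partition') : ℕ := μ.cells.card

lemma row_finite (μ : Partition') (j : ℕ) : {i : ℕ | j < μ.part i}.Finite := by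
  obtain ⟨N, hN⟩ := μ.eventually_zero
  apply (Set.finite_Iio N).subset
  intro i hi
  simp only [Set.mem_setOf_eq] at hi
  simp only [Set.mem_Iio]
  by_contra h
  push_neg at h
  rw [hN i h] at hi
  omega

/-- The conjugate (transposed) partition `μ^t`: `(μ^t)_{j+1} = #{i : μ_{i+1} > j}`. -/
noncomputable def conj (μ : Partition') : Partition' where
  part j := Nat.card {i : ℕ | j < μ.part i}
  antitone' := by
    intro j k hjk
    exact Nat.card_mono (μ.row_finite j) (fun i hi => lt_of_le_of_lt hjk hi)
  eventually_zero := by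
    refine ⟨μ.part 0, fun j hj => ?_⟩
    have h : {i : ℕ | j < μ.part i} = (∅ : Set ℕ) := by
      ext i
      simp only [Set.mem_setOf_eq, Set.mem_empty_iff_false, iff_false, not_lt]
      exact le_trans (μ.antitone' (Nat.zero_le i)) hj
    try simp only []
    rw [h]
    simp

/-- The content `c(x) = j - i` of a (0-indexed) cell `x = (i,j)`. -/
def content (x : ℕ × ℕ) : ℤ := (x.2 : ℤ) - (x.1 : ℤ)

/-- The hook length `h(x) = μ_i + (μ^t)_j - i - j + 1` (1-indexed) of a cell of `μ`,
as an integer. -/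
noncomputable def hook (μ : Partition') (x : ℕ × ℕ) : ℤ :=
  (μ.part x.1 : ℤ) + (μ.conj.part x.2 : ℤ) - (x.1 : ℤ) - (x.2 : ℤ) - 1

/-- `n(μ) = Σ_i (i-1) μ_i` (1-indexed), i.e. `Σ_i i * μ_{i+1}` (0-indexed). -/
noncomputable def nstat (μ : Partition') : ℕ := ∑ᶠ i : ℕ, i * μ.part i

/-- The empty partition. -/
def empty : Partition' := ⟨fun _ => 0, fun _ _ _ => le_rfl, ⟨0, fun _ _ => rfl⟩⟩

/-- The number of (nonzero) parts of `μ`. -/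
noncomputable def length (μ : Partition') : ℕ := μ.conj.part 0

end Partition'

/-! Reindex the pairs `i < j` by the row `i` and the offset `d = j - i - 1`. Only finitely many
rows are nonzero, and each row sums to minus the hook sum of that row: for fixed `i`, the positive
integers are split into the gaps `μ_i - μ_j + j - i` (`j > i`, strictly increasing in `j`) and the
hook lengths `h(i, k)` of the cells of row `i`. A gap equals `h(i, k)` exactly when `h(j, k) = 0`,
which never happens; an integer strictly between the gaps at `j - 1` and `j` is the hook length
`h(i, k)` of the column `k` of length `j`. -/

theorem exists_lt_le_succ {α : Type*} [LinearOrder α] (G : ℕ → α) {a : α} (h0 : G 0 < a)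
    {n : ℕ} (hn : a ≤ G n) : ∃ d, G d < a ∧ a ≤ G (d + 1) := by
  induction n with
  | zero => exact absurd hn (not_le.2 h0)
  | succ n ih => exact (lt_or_ge (G n) a).elim (fun h => ⟨n, h, hn⟩) ih

open Set Function in
theorem tsum_comp_add_sum_eq_tsum_comp {E : Type*} [AddCommGroup E] [UniformSpace E]
    [IsUniformAddGroup E] [CompleteSpace E] [T2Space E]
    {φ : ℕ → E} (hφ : Summable φ) {f g : ℕ → ℕ} (hf : Injective f) (hg : Injective g)
    {s : Finset ℕ} (hdisj : Disjoint (range f) s) (hcover : range f ∪ s = range g) :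
    ∑' d, φ (f d) + ∑ m ∈ s, φ m = ∑' d, φ (g d) := by
  rw [← tsum_range φ hf, ← tsum_range φ hg, ← Finset.tsum_subtype', ← hcover,
    Summable.tsum_union_disjoint hdisj (hφ.subtype _) (hφ.subtype _)]

def prodEquivSubtypeLt : ℕ × ℕ ≃ {p : ℕ × ℕ // p.1 < p.2} where
  toFun x := ⟨(x.1, x.1 + x.2 + 1), by omega⟩
  invFun p := (p.1.1, p.1.2 - p.1.1 - 1)
  left_inv x := Prod.ext rfl (by dsimp only; omega)
  right_inv p := Subtype.ext (Prod.ext rfl (by have := p.2; dsimp only; omega))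

namespace Partition'

variable (μ : Partition')

theorem exists_setOf_lt_part_eq_Iio (k : ℕ) : ∃ n, {i | k < μ.part i} = Set.Iio n := by
  classical
  have h : ∃ n, μ.part n ≤ k := by
    obtain ⟨N, hN⟩ := μ.eventually_zero
    exact ⟨N, (hN N le_rfl).symm ▸ Nat.zero_le k⟩
  refine ⟨Nat.find h, Set.ext fun i => ?_⟩
  simp only [Set.mem_ofPred_eq, Set.mem_Iio, Nat.lt_find_iff, not_le]
  exact ⟨fun hi m hm => hi.trans_le (μ.antitone' hm), fun hi => hi i le_rfl⟩

theorem lt_conj_part_iff {i k : ℕ} : i < μ.conj.part k ↔ k < μ.part i := by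
  obtain ⟨n, hn⟩ := μ.exists_setOf_lt_part_eq_Iio k
  have hconj : μ.conj.part k = n := by simp [conj, hn]
  rw [hconj, ← Set.mem_Iio, ← hn, Set.mem_ofPred_eq]

theorem conj_part_eq_succ_iff {j k : ℕ} :
    μ.conj.part k = j + 1 ↔ k < μ.part j ∧ μ.part (j + 1) ≤ k := by
  have h := μ.lt_conj_part_iff (i := j) (k := k)
  have h' := μ.lt_conj_part_iff (i := j + 1) (k := k)
  omega

theorem hook_pos_iff (x : ℕ × ℕ) : 0 < μ.hook x ↔ x.2 < μ.part x.1 := by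
  have h := μ.lt_conj_part_iff (i := x.1) (k := x.2)
  unfold hook
  omega

theorem hook_ne_zero (x : ℕ × ℕ) : μ.hook x ≠ 0 := by
  have h := μ.lt_conj_part_iff (i := x.1) (k := x.2)
  unfold hook
  omega

theorem hook_strictAnti (i : ℕ) : StrictAnti fun k => μ.hook (i, k) :=
  strictAnti_nat_of_succ_lt fun k => by
    have := μ.conj.antitone' (Nat.le_add_right k 1)
    simp only [hook]
    omega

theorem mem_cells_iff {x : ℕ × ℕ} : x ∈ μ.cells ↔ x.2 < μ.part x.1 :=
  μ.cellsSet_finite.mem_toFinset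

theorem tsum_sum_range_part_eq_sum_cells {E : Type*} [AddCommMonoid E] [TopologicalSpace E]
    (f : ℕ × ℕ → E) :
    ∑' i, ∑ k ∈ Finset.range (μ.part i), f (i, k) = ∑ x ∈ μ.cells, f x := by
  obtain ⟨N, hN⟩ := μ.eventually_zero
  rw [tsum_eq_sum (s := Finset.range N) fun i hi => by
      rw [hN i (by simpa using hi), Finset.range_zero, Finset.sum_empty],
    Finset.sum_finset_product _ _ _ fun x => ?_]
  rw [mem_cells_iff, Finset.mem_range, Finset.mem_range]
  refine ⟨fun hx => ⟨?_, hx⟩, And.right⟩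
  by_contra! hxN
  rw [hN x.1 hxN] at hx
  exact Nat.not_lt_zero _ hx

/-- `μ_i − μ_j + j − i` for `j = i + d + 1`. -/
def rowGap (i d : ℕ) : ℕ := μ.part i - μ.part (i + d + 1) + (d + 1)

theorem natCast_rowGap (i d : ℕ) :
    (μ.rowGap i d : ℤ) = μ.part i - μ.part (i + d + 1) + (d + 1) := by
  have := μ.antitone' (show i ≤ i + d + 1 by omega)
  unfold rowGap
  omega

theorem rowGap_of_part_eq_zero {i : ℕ} (hi : μ.part i = 0) (d : ℕ) :
    μ.rowGap i d = d + 1 := by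
  simp [rowGap, hi]

theorem rowGap_strictMono (i : ℕ) : StrictMono (μ.rowGap i) :=
  strictMono_nat_of_lt_succ fun d => by
    have h₁ := μ.antitone' (show i + d + 1 ≤ i + d + 1 + 1 by omega)
    have h₂ := μ.antitone' (show i ≤ i + d + 1 by omega)
    simp only [rowGap, ← add_assoc]
    omega

theorem hook_sub_rowGap (i d k : ℕ) :
    μ.hook (i, k) - μ.rowGap i d = μ.hook (i + d + 1, k) := by
  rw [natCast_rowGap]
  unfold hook
  push_cast
  ring

theorem exists_rowGap_eq_or_hook_eq (i : ℕ) {m : ℕ} (hm : 0 < m) :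
    (∃ d, μ.rowGap i d = m) ∨ ∃ k < μ.part i, μ.hook (i, k) = m := by
  obtain ⟨d, hlt, hle⟩ := exists_lt_le_succ (fun e => μ.part i - μ.part (i + e) + e)
    (by simpa using hm) (n := m) (by omega)
  simp only [← add_assoc] at hle
  have hd : μ.part (i + d) ≤ μ.part i := μ.antitone' (Nat.le_add_right i d)
  rcases hle.eq_or_lt with heq | hgt
  · exact Or.inl ⟨d, heq.symm⟩
  · have hconj : μ.conj.part (μ.part i + d - m) = i + d + 1 :=
      (μ.conj_part_eq_succ_iff).2 ⟨by omega, by omega⟩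
    refine Or.inr ⟨μ.part i + d - m, by omega, ?_⟩
    simp only [hook]
    omega

theorem zpow_sub_zpow_eq_pow_rowGap_sub_pow (t : ℂ) {i j : ℕ} (hij : i < j) :
    t ^ ((μ.part i : ℤ) - μ.part j + j - i) - t ^ ((j : ℤ) - i) =
      t ^ μ.rowGap i (j - i - 1) - t ^ (j - i - 1 + 1) := by
  obtain ⟨d, rfl⟩ : ∃ d, j = i + d + 1 := ⟨j - i - 1, by omega⟩
  have hd : i + d + 1 - i - 1 = d := by omega
  rw [hd, ← zpow_natCast, ← zpow_natCast, natCast_rowGap]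
  push_cast
  ring_nf

noncomputable def rowHooks (i : ℕ) : Finset ℕ :=
  (Finset.range (μ.part i)).image fun k => (μ.hook (i, k)).toNat

theorem disjoint_range_rowGap_rowHooks (i : ℕ) :
    Disjoint (Set.range (μ.rowGap i)) (μ.rowHooks i) := by
  rw [Set.disjoint_left]
  rintro _ ⟨d, rfl⟩ hm
  obtain ⟨k, hk, hkd⟩ := Finset.mem_image.1 hm
  have := (μ.hook_pos_iff (i, k)).2 (Finset.mem_range.1 hk)
  exact μ.hook_ne_zero (i + d + 1, k) (by rw [← hook_sub_rowGap]; omega)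

theorem range_rowGap_union_rowHooks (i : ℕ) :
    Set.range (μ.rowGap i) ∪ μ.rowHooks i = Set.range (· + 1) := by
  ext m
  simp only [rowHooks, Set.mem_union, Set.mem_range, Finset.coe_image, Set.mem_image,
    Finset.mem_coe, Finset.mem_range]
  constructor
  · rintro (⟨d, rfl⟩ | ⟨k, hk, rfl⟩)
    · exact ⟨μ.rowGap i d - 1, by simp only [rowGap]; omega⟩
    · exact ⟨(μ.hook (i, k)).toNat - 1, by have := (μ.hook_pos_iff (i, k)).2 hk; omega⟩
  · rintro ⟨m, rfl⟩
    rcases μ.exists_rowGap_eq_or_hook_eq i m.succ_pos with h | ⟨k, hk, hkm⟩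
    · exact Or.inl h
    · exact Or.inr ⟨k, hk, by omega⟩

theorem sum_rowHooks {E : Type*} [AddCommMonoid E] (i : ℕ) (f : ℤ → E) :
    ∑ m ∈ μ.rowHooks i, f m = ∑ k ∈ Finset.range (μ.part i), f (μ.hook (i, k)) := by
  have hpos : ∀ k ∈ Finset.range (μ.part i), 0 < μ.hook (i, k) :=
    fun k hk => (μ.hook_pos_iff (i, k)).2 (Finset.mem_range.1 hk)
  rw [rowHooks, Finset.sum_image fun k hk k' hk' h => (μ.hook_strictAnti i).injective <| by
    have := hpos k hk; have := hpos k' hk'; omega]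
  exact Finset.sum_congr rfl fun k hk => by rw [Int.toNat_of_nonneg (hpos k hk).le]

theorem tsum_pow_rowGap_sub_pow {t : ℂ} (ht : ‖t‖ < 1) (i : ℕ) :
    ∑' d, (t ^ μ.rowGap i d - t ^ (d + 1)) =
      -∑ k ∈ Finset.range (μ.part i), t ^ μ.hook (i, k) := by
  have hgeo : Summable (t ^ · : ℕ → ℂ) := summable_geometric_of_norm_lt_one ht
  have hA : Summable fun d => t ^ μ.rowGap i d :=
    hgeo.comp_injective (μ.rowGap_strictMono i).injective
  have hB : Summable fun d : ℕ => t ^ (d + 1) := hgeo.comp_injective (add_left_injective 1)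
  rw [hA.tsum_sub hB, ← tsum_comp_add_sum_eq_tsum_comp hgeo (μ.rowGap_strictMono i).injective
    (add_left_injective 1) (μ.disjoint_range_rowGap_rowHooks i)
    (μ.range_rowGap_union_rowHooks i), sub_add_cancel_left, ← μ.sum_rowHooks i (t ^ ·)]
  simp only [zpow_natCast]

theorem summable_norm_pow_rowGap_sub_pow {t : ℂ} (ht : ‖t‖ < 1) :
    Summable fun x : ℕ × ℕ => ‖t ^ μ.rowGap x.1 x.2 - t ^ (x.2 + 1)‖ := by
  obtain ⟨N, hN⟩ := μ.eventually_zero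
  have hgeo : Summable (‖t‖ ^ · : ℕ → ℝ) := summable_geometric_of_lt_one (norm_nonneg t) ht
  refine (summable_prod_of_nonneg fun _ => norm_nonneg _).2 ⟨fun i => ?_, ?_⟩
  · refine .of_nonneg_of_le (fun _ => norm_nonneg _) (fun d => ?_)
      ((hgeo.comp_injective (μ.rowGap_strictMono i).injective).add
        (hgeo.comp_injective (add_left_injective 1)))
    simpa only [Function.comp_apply, norm_pow] using
      norm_sub_le (t ^ μ.rowGap i d) (t ^ (d + 1))
  · refine summable_of_ne_finset_zero (s := Finset.range N) fun i hi => ?_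
    simp [μ.rowGap_of_part_eq_zero (hN i (by simpa using hi))]

end Partition'

theorem hook_sum_as_double_series_general (μ : Partition') (t : ℂ) (h1 : ‖t‖ < 1) :
    Summable (fun p : {p : ℕ × ℕ // p.1 < p.2} =>
      ‖t ^ ((μ.part p.1.1 : ℤ) - (μ.part p.1.2 : ℤ) + (p.1.2 : ℤ) - (p.1.1 : ℤ)) -
        t ^ ((p.1.2 : ℤ) - (p.1.1 : ℤ))‖) ∧
    ∑' p : {p : ℕ × ℕ // p.1 < p.2},
        (t ^ ((μ.part p.1.1 : ℤ) - (μ.part p.1.2 : ℤ) + (p.1.2 : ℤ) - (p.1.1 : ℤ)) -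
          t ^ ((p.1.2 : ℤ) - (p.1.1 : ℤ))) =
      -∑ x ∈ μ.cells, t ^ μ.hook x := by
  set F : ℕ × ℕ → ℂ := fun x => t ^ μ.rowGap x.1 x.2 - t ^ (x.2 + 1)
  have hF : ∀ p : {p : ℕ × ℕ // p.1 < p.2}, _ = F (prodEquivSubtypeLt.symm p) :=
    fun p => μ.zpow_sub_zpow_eq_pow_rowGap_sub_pow t (i := p.1.1) (j := p.1.2) p.2
  have hsummable : Summable fun x => ‖F x‖ := μ.summable_norm_pow_rowGap_sub_pow h1
  simp only [hF]
  refine ⟨prodEquivSubtypeLt.symm.summable_iff.2 hsummable, ?_⟩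
  rw [prodEquivSubtypeLt.symm.tsum_eq F,
    hsummable.of_norm.tsum_prod' hsummable.of_norm.prod_factor]
  simp only [F, μ.tsum_pow_rowGap_sub_pow h1, tsum_neg]
  exact congrArg _ (μ.tsum_sum_range_part_eq_sum_cells fun x => t ^ μ.hook x)

/-- Identity (69): for `0 < |t| < 1`, the double series
`Σ_{1 ≤ i < j} (t^{μ_i − μ_j + j − i} − t^{j−i})` converges absolutely and equals
`− Σ_{x∈μ} t^{h(x)}`. -/
theorem hook_sum_as_double_series (μ : Partition') (t : ℂ) (h0 : 0 < ‖t‖) (h1 : ‖t‖ < 1) :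
    Summable (fun p : {p : ℕ × ℕ // p.1 < p.2} =>
      ‖t ^ ((μ.part p.1.1 : ℤ) - (μ.part p.1.2 : ℤ) + (p.1.2 : ℤ) - (p.1.1 : ℤ)) -
        t ^ ((p.1.2 : ℤ) - (p.1.1 : ℤ))‖) ∧
    ∑' p : {p : ℕ × ℕ // p.1 < p.2},
        (t ^ ((μ.part p.1.1 : ℤ) - (μ.part p.1.2 : ℤ) + (p.1.2 : ℤ) - (p.1.1 : ℤ)) -
          t ^ ((p.1.2 : ℤ) - (p.1.1 : ℤ))) =
      -∑ x ∈ μ.cells, t ^ μ.hook x :=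
  hook_sum_as_double_series_general μ t h1
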